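/- arXiv:1502.04052 — 4 statements merged into one kernel-verified Lean document; each statement's English description precedes it below -/
import Mathlib

section
/- Truthfulness of VCG in an assignment (matching) market: let m ≥ 1, j : Fin m, and let w, w' : Fin m → Fin m → ℝ be two weight matrices (w k g is buyer k's value for good g) with w k = w' k for every buyer k ≠ j (w j is buyer j's true values and w' j is an arbitrary misreport). Let σ be a permutation of Fin m maximizing ∑_{k} w k (σ k) over all permutations, let σ' be a permutation maximizing ∑_{k} w' k (σ' k) over all permutations, and let M := max over permutations τ of Fin m of ∑_{k ≠ j} w k (τ k). Define buyer j's VCG payments p := M − ∑_{k ≠ j} w k (σ k) and p' := M − ∑_{k ≠ j} w k (σ' k) (since w' k = w k for k ≠ j, the residual terms are the same under both reports). Then w j (σ j) − p ≥ w j (σ' j) − p': buyer j's utility for the good it is matched to, measured by its true values w j and net of its VCG payment, is at least as large under truthful reporting as under any deviation. -/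
/-!
The Clarke payment makes buyer `j`'s utility equal to the total true welfare of the chosen
matching minus the constant `M`, so no matching gives `j` more utility than a
welfare-maximizing one.
-/

open Finset

section VCG

variable {ι α : Type*} [Fintype ι] [DecidableEq ι]

noncomputable def vcgUtility (w : ι → α → ℝ) (M : ℝ) (σ : ι → α) (j : ι) : ℝ :=
  w j (σ j) - (M - ∑ k ∈ univ.erase j, w k (σ k))

theorem vcgUtility_eq_welfare_sub (w : ι → α → ℝ) (M : ℝ) (σ : ι → α) (j : ι) :
    vcgUtility w M σ j = ∑ k, w k (σ k) - M := by
  rw [vcgUtility, ← add_sum_erase univ (fun k => w k (σ k)) (mem_univ j)]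
  ring

theorem vcgUtility_le_of_welfare_le (w : ι → α → ℝ) (M : ℝ) {σ τ : ι → α} (j : ι)
    (h : ∑ k, w k (τ k) ≤ ∑ k, w k (σ k)) :
    vcgUtility w M τ j ≤ vcgUtility w M σ j := by
  rw [vcgUtility_eq_welfare_sub, vcgUtility_eq_welfare_sub]
  exact sub_le_sub_right h M

end VCG

theorem vcg_matching_truthful_general {m : ℕ} (j : Fin m)
    (w : Fin m → Fin m → ℝ)
    (σ σ' : Equiv.Perm (Fin m))
    (hσ : ∀ τ : Equiv.Perm (Fin m), ∑ k, w k (τ k) ≤ ∑ k, w k (σ k))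
    (M : ℝ) :
    w j (σ j) - (M - ∑ k ∈ univ.erase j, w k (σ k)) ≥
      w j (σ' j) - (M - ∑ k ∈ univ.erase j, w k (σ' k)) :=
  vcgUtility_le_of_welfare_le w M j (hσ σ')

/-- Truthfulness of VCG in an assignment (matching) market: buyer `j`'s true-value
utility for the good it is matched to, net of its VCG payment, is at least as large
under truthful reporting (weights `w`, welfare-maximizing matching `σ`) as under any
deviation (weights `w'` agreeing with `w` off `j`, welfare-maximizing matching `σ'`),
where `M` is the maximal residual welfare of the other buyers over all matchings. -/
theorem vcg_matching_truthful {m : ℕ} (hm : 1 ≤ m) (j : Fin m)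
    (w w' : Fin m → Fin m → ℝ) (hww' : ∀ k : Fin m, k ≠ j → w k = w' k)
    (σ σ' : Equiv.Perm (Fin m))
    (hσ : ∀ τ : Equiv.Perm (Fin m), ∑ k, w k (τ k) ≤ ∑ k, w k (σ k))
    (hσ' : ∀ τ : Equiv.Perm (Fin m), ∑ k, w' k (τ k) ≤ ∑ k, w' k (σ' k))
    (M : ℝ)
    (hM : IsGreatest
      {x : ℝ | ∃ τ : Equiv.Perm (Fin m), x = ∑ k ∈ univ.erase j, w k (τ k)} M) :
    w j (σ j) - (M - ∑ k ∈ univ.erase j, w k (σ k)) ≥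
      w j (σ' j) - (M - ∑ k ∈ univ.erase j, w k (σ' k)) :=
  vcg_matching_truthful_general j w σ σ' hσ M
end

section
/- Deferred-decision / exchangeability step in the distribution-preservation lemma: let T be a measurable space, μ a probability measure on T, and k a natural number. Then the pushforward of the product probability measure μ ⊗ μ^k ⊗ uniform(Fin (k+1)) under the map (t, r', i) ↦ (i.insertNth t r', i) is equal to the product measure μ^{k+1} ⊗ uniform(Fin (k+1)). In words: inserting a fresh μ-distributed sample at a uniformly random slot of k i.i.d. μ-samples yields a profile of k+1 i.i.d. μ-samples, and this profile is independent of the chosen slot. -/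
/-!
For a fixed slot `i`, inserting at `i` is the inverse of the measure-preserving split
`μ^(k+1) ≃ μ ⊗ μ^k` at `i`, so it pushes `μ ⊗ μ^k` to `μ^(k+1)`. As this holds for every `i`,
the slot-dependent map `(x, i) ↦ (i.insertNth x.1 x.2, i)` pushes `(μ ⊗ μ^k) ⊗ ρ` to
`μ^(k+1) ⊗ ρ` for any law `ρ` of the slot, in particular the uniform one.
-/

open MeasureTheory

theorem MeasureTheory.measurePreserving_insertNth {n : ℕ} {α : Fin (n + 1) → Type*}
    [∀ i, MeasurableSpace (α i)] (μ : ∀ i, Measure (α i)) [∀ i, SigmaFinite (μ i)]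
    (i : Fin (n + 1)) :
    MeasurePreserving (fun p : α i × ((j : Fin n) → α (i.succAbove j)) => i.insertNth p.1 p.2)
      ((μ i).prod (Measure.pi fun j => μ (i.succAbove j))) (Measure.pi μ) :=
  (measurePreserving_piFinSuccAbove μ i).symm

theorem MeasureTheory.measurePreserving_prod_of_forall_countable {ι α β : Type*}
    [MeasurableSpace ι] [Countable ι] [MeasurableSingletonClass ι]
    [MeasurableSpace α] [MeasurableSpace β] {μ : Measure α} {ν : Measure β} [SFinite μ]
    [SFinite ν] (ρ : Measure ι) [SFinite ρ] {f : ι → α → β}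
    (hf : ∀ i, MeasurePreserving (f i) μ ν) :
    MeasurePreserving (fun p : α × ι => (f p.2 p.1, p.2)) (μ.prod ρ) (ν.prod ρ) := by
  have hf_meas : Measurable (Function.uncurry f) :=
    measurable_from_prod_countable_right fun i => (hf i).measurable
  have hskew := (MeasurePreserving.id ρ).skew_product hf_meas (ae_of_all _ fun i => (hf i).map_eq)
  exact (Measure.measurePreserving_swap.comp hskew).comp Measure.measurePreserving_swap

/-- Deferred-decision / exchangeability step: inserting a fresh `μ`-distributed sample
at a uniformly random slot of `k` i.i.d. `μ`-samples yields a profile of `k+1` i.i.d.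
`μ`-samples, independent of the chosen slot. -/
theorem insertNth_uniform_map_eq {T : Type*} [MeasurableSpace T]
    (μ : Measure T) [IsProbabilityMeasure μ] (k : ℕ) :
    Measure.map
      (fun p : T × (Fin k → T) × Fin (k + 1) => (p.2.2.insertNth p.1 p.2.1, p.2.2))
      (μ.prod ((Measure.pi fun _ : Fin k => μ).prod
        (PMF.uniformOfFintype (Fin (k + 1))).toMeasure)) =
    (Measure.pi fun _ : Fin (k + 1) => μ).prod
      (PMF.uniformOfFintype (Fin (k + 1))).toMeasure := by
  have hslot := measurePreserving_prod_of_forall_countable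
    (PMF.uniformOfFintype (Fin (k + 1))).toMeasure
    (measurePreserving_insertNth (α := fun _ => T) fun _ => μ)
  exact (hslot.comp (measurePreserving_prodAssoc _ _ _).symm).map_eq
end

section
/- Uniform index through a data-dependent perfect matching: let T be a measurable space, μ a probability measure on T, m ≥ 1, and let (X, ν) be any measurable space equipped with a probability measure (auxiliary independent randomness, e.g. the replica profile). Let G : X → (Fin m → T) → (Fin m → Fin m) be any rule such that G x s is a bijection of Fin m for all x and s, and such that (x, s, a) ↦ G x s a is measurable. Then the pushforward of the product probability measure ν ⊗ μ^m ⊗ uniform(Fin m) under the map (x, s, i) ↦ s (G x s i) is equal to μ. In words: if s consists of m i.i.d. μ-samples and i is an independent uniformly random index, then the entry of s selected by applying any (data-dependent) perfect matching to i is an unbiased sample from μ. -/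
/-!
Conditionally on the auxiliary randomness `x` and the samples `s`, the index `G x s i` is again
uniform, because a bijection preserves the uniform distribution; so the selected entry has the
law of `s` evaluated at an independent uniform index. Conditionally on that index, this is a
single coordinate of an i.i.d. sample, whose law is `μ`.
-/

open MeasureTheory

theorem PMF.map_uniformOfFintype_of_bijective {α : Type*} [Fintype α] [Nonempty α]
    {f : α → α} (hf : f.Bijective) : (uniformOfFintype α).map f = uniformOfFintype α := by
  ext a
  obtain ⟨b, rfl⟩ := hf.2 a
  rw [PMF.map_apply, tsum_eq_single b fun c hc => if_neg (hf.1.ne hc).symm, if_pos rfl,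
    uniformOfFintype_apply, uniformOfFintype_apply]

namespace MeasureTheory.Measure

variable {α β γ : Type*} [MeasurableSpace α] [MeasurableSpace β] [MeasurableSpace γ]
  {μ : Measure α} {ν : Measure β}

theorem measure_prodMk_preimage {f : α × β → γ} (hf : Measurable f) (a : α) {s : Set γ}
    (hs : MeasurableSet s) : ν (Prod.mk a ⁻¹' (f ⁻¹' s)) = ν.map (fun b => f (a, b)) s :=
  (map_apply (hf.comp measurable_prodMk_left) hs).symm

theorem map_prod_congr [SFinite ν] {f g : α × β → γ} (hf : Measurable f) (hg : Measurable g)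
    (h : ∀ a, ν.map (fun b => f (a, b)) = ν.map fun b => g (a, b)) :
    (μ.prod ν).map f = (μ.prod ν).map g := by
  ext s hs
  rw [map_apply hf hs, map_apply hg hs, prod_apply (hf hs), prod_apply (hg hs)]
  refine lintegral_congr fun a => ?_
  rw [measure_prodMk_preimage hf a hs, measure_prodMk_preimage hg a hs, h a]

theorem map_prod_eq_of_forall_map_eq [SFinite ν] [IsProbabilityMeasure μ] {f : α × β → γ}
    (hf : Measurable f) {ρ : Measure γ} (h : ∀ a, ν.map (fun b => f (a, b)) = ρ) :
    (μ.prod ν).map f = ρ := by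
  ext s hs
  rw [map_apply hf hs, prod_apply (hf hs)]
  calc ∫⁻ a, ν (Prod.mk a ⁻¹' (f ⁻¹' s)) ∂μ = ∫⁻ _, ρ s ∂μ :=
        lintegral_congr fun a => by rw [measure_prodMk_preimage hf a hs, h a]
    _ = ρ s := by simp

end MeasureTheory.Measure

open Measure

theorem measurable_eval_prod {ι T : Type*} [Countable ι] [MeasurableSpace ι]
    [MeasurableSingletonClass ι] [MeasurableSpace T] :
    Measurable fun q : (ι → T) × ι => q.1 q.2 :=
  measurable_from_prod_countable_left measurable_pi_apply

theorem map_eval_pi_prod {ι T : Type*} [Fintype ι] [MeasurableSpace ι]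
    [MeasurableSingletonClass ι] [MeasurableSpace T] (μ : Measure T) [IsProbabilityMeasure μ]
    (κ : Measure ι) [IsProbabilityMeasure κ] :
    ((Measure.pi fun _ : ι => μ).prod κ).map (fun q => q.1 q.2) = μ := by
  rw [← prod_swap, map_map measurable_eval_prod measurable_swap]
  exact map_prod_eq_of_forall_map_eq (measurable_eval_prod.comp measurable_swap)
    fun i => (measurePreserving_eval _ i).map_eq

theorem map_eval_bijective_pi_prod_uniform {ι T : Type*} [Fintype ι] [Nonempty ι]
    [MeasurableSpace ι] [MeasurableSingletonClass ι] [MeasurableSpace T]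
    (μ : Measure T) [IsProbabilityMeasure μ] {σ : (ι → T) → ι → ι}
    (hσ : ∀ s, (σ s).Bijective) (hσm : Measurable fun q : (ι → T) × ι => σ q.1 q.2) :
    ((Measure.pi fun _ : ι => μ).prod (PMF.uniformOfFintype ι).toMeasure).map
      (fun q => q.1 (σ q.1 q.2)) = μ := by
  refine (map_prod_congr (measurable_eval_prod.comp (measurable_fst.prodMk hσm))
    measurable_eval_prod fun s => ?_).trans (map_eval_pi_prod μ _)
  change map (s ∘ σ s) _ = map s _
  rw [← map_map (measurable_of_finite s) (measurable_of_finite (σ s)),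
    PMF.toMeasure_map _ _ (measurable_of_finite _), PMF.map_uniformOfFintype_of_bijective (hσ s)]

/-- Uniform index through a data-dependent perfect matching: if `s` consists of `m`
i.i.d. `μ`-samples and `i` is an independent uniformly random index (with auxiliary
independent randomness `x ~ ν`), then the entry of `s` selected by applying any
measurable data-dependent perfect matching `G x s` to `i` is an unbiased sample
from `μ`. -/
theorem uniform_through_matching {T X : Type*} [MeasurableSpace T] [MeasurableSpace X]
    (μ : Measure T) [IsProbabilityMeasure μ]
    (ν : Measure X) [IsProbabilityMeasure ν]
    (m : ℕ) [NeZero m]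
    (G : X → (Fin m → T) → (Fin m → Fin m))
    (hGbij : ∀ (x : X) (s : Fin m → T), Function.Bijective (G x s))
    (hGmeas : Measurable
      (fun q : (X × (Fin m → T)) × Fin m => G q.1.1 q.1.2 q.2)) :
    Measure.map
      (fun p : X × (Fin m → T) × Fin m => p.2.1 (G p.1 p.2.1 p.2.2))
      (ν.prod ((Measure.pi fun _ : Fin m => μ).prod
        (PMF.uniformOfFintype (Fin m)).toMeasure)) = μ := by
  have hG : Measurable fun p : X × (Fin m → T) × Fin m => G p.1 p.2.1 p.2.2 :=
    hGmeas.comp (measurable_fst.prodMk measurable_snd.fst |>.prodMk measurable_snd.snd)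
  exact map_prod_eq_of_forall_map_eq (measurable_eval_prod.comp (measurable_snd.fst.prodMk hG))
    fun x => map_eval_bijective_pi_prod_uniform μ (hGbij x) (hG.comp measurable_prodMk_left)
end

section
/- Truthfulness of the Replica-Surrogate-Matching procedure for a single agent facing i.i.d. opponents: let T and O be measurable spaces, μ a probability measure on T, n = (n−1) + 1 ≥ 1 the number of agents, j : Fin n, and m = k + 1 ≥ 1 the number of replicas. Let A : (Fin n → T) → O be measurable and let v : T → O → ℝ be jointly measurable with |v t o| ≤ C for some constant C. Let (σ, p) be a VCG matching selector for the expected weight function w_j on markets of size m. For true type t and report b, define the expected utility U(t, b) := ∫ over (r', s, i) ~ μ^{m−1} ⊗ μ^m ⊗ uniform(Fin m) of [ (∫ over x ~ μ^{n−1} of v(t, A(j.insertNth (s (σ(R, s) i)) x))) − p(R, s) i ], where R := i.insertNth b r' is the replica profile with the report inserted at slot i. Then for all t, b : T, U(t, t) ≥ U(t, b): when the other n−1 inputs to the algorithm A are i.i.d. μ-samples independent of agent j's coins, truthfully reporting one's type to the Replica-Surrogate-Matching procedure maximizes expected utility. -/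
open MeasureTheory Finset

/-!
Fix the other replicas `r'`, the surrogates `s` and the agent's slot `i`, and let `R_d` be
the replica profile with report `d` in slot `i`. Integrating out the opponents turns the
agent's value into `w_j(t, ·)`, so its utility is `w_j(t, s (σ(R_d, s) i)) - p(R_d, s) i`.
By the Clarke pivot form of the payment this is the welfare of the matching `σ(R_d, s)`
evaluated at the truthful profile `R_t`, minus a term not depending on `d`; since
`σ(R_t, s)` maximizes that welfare, truthful reporting is optimal for every `(r', s, i)`.
Everything is measurable and bounded, so the pointwise inequality integrates.
-/

section Measurability

variable {α T : Type*} [MeasurableSpace α] [MeasurableSpace T]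

theorem Measurable.apply_of_countable {ι : Type*} [Countable ι] [MeasurableSpace ι]
    [MeasurableSingletonClass ι] {h : α → ι → T} {g : α → ι} (hh : Measurable h)
    (hg : Measurable g) : Measurable fun a => h a (g a) :=
  (measurable_from_prod_countable_left (f := fun q : (ι → T) × ι => q.1 q.2)
    fun i => measurable_pi_apply i).comp (hh.prodMk hg)

theorem Measurable.finInsertNth {m : ℕ} {g : α → Fin (m + 1)} {u : α → T}
    {h : α → Fin m → T} (hg : Measurable g) (hu : Measurable u) (hh : Measurable h) :
    Measurable fun a => ((g a).insertNth (u a) (h a) : Fin (m + 1) → T) := by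
  have : Measurable fun q : (T × (Fin m → T)) × Fin (m + 1) =>
      (q.2.insertNth q.1.1 q.1.2 : Fin (m + 1) → T) :=
    measurable_from_prod_countable_left fun i =>
      (MeasurableEquiv.piFinSuccAbove (fun _ => T) i).symm.measurable
  exact this.comp ((hu.prodMk hh).prodMk hg)

end Measurability

theorem abs_integral_le_of_forall_abs_le {α : Type*} [MeasurableSpace α] {μ : Measure α}
    [IsProbabilityMeasure μ] {f : α → ℝ} {C : ℝ} (hf : ∀ x, |f x| ≤ C) :
    |∫ x, f x ∂μ| ≤ C := by
  simpa using norm_integral_le_of_norm_le_const (μ := μ) (f := f)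
    (Filter.Eventually.of_forall (p := fun x => ‖f x‖ ≤ C) hf)

theorem measurable_integral_insertNth {T O : Type*} [MeasurableSpace T] [MeasurableSpace O]
    {n : ℕ} (ν : Measure (Fin n → T)) [SFinite ν] (j : Fin (n + 1))
    {A : (Fin (n + 1) → T) → O} (hA : Measurable A) {v : T → O → ℝ}
    (hv : Measurable fun q : T × O => v q.1 q.2) :
    Measurable fun q : T × T => ∫ x, v q.1 (A (j.insertNth q.2 x)) ∂ν := by
  refine (StronglyMeasurable.integral_prod_right' (f := fun z : (T × T) × (Fin n → T) =>
    v z.1.1 (A (j.insertNth z.1.2 z.2))) ?_).measurable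
  exact (hv.comp (measurable_fst.fst.prodMk (hA.comp (measurable_const.finInsertNth
    measurable_fst.snd measurable_snd)))).stronglyMeasurable

theorem abs_ciSup_le_of_forall_abs_le {κ : Type*} [Finite κ] [Nonempty κ] {f : κ → ℝ}
    {B : ℝ} (hf : ∀ i, |f i| ≤ B) : |⨆ i, f i| ≤ B :=
  abs_le.2 ⟨(neg_le_of_abs_le (hf (Classical.arbitrary κ))).trans
      (le_ciSup (Set.finite_range f).bddAbove _),
    ciSup_le fun i => le_of_abs_le (hf i)⟩

section VCG

variable {ι α β : Type*} [Fintype ι] [DecidableEq ι]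

structure IsVCGMatching (W : α → β → ℝ) (σ : (ι → α) → (ι → β) → Equiv.Perm ι)
    (p : (ι → α) → (ι → β) → ι → ℝ) : Prop where
  welfare_le (r : ι → α) (s : ι → β) (τ : Equiv.Perm ι) :
    ∑ a, W (r a) (s (τ a)) ≤ ∑ a, W (r a) (s (σ r s a))
  payment_eq (r : ι → α) (s : ι → β) (a : ι) :
    p r s a = (⨆ τ : Equiv.Perm ι, ∑ a' ∈ univ.erase a, W (r a') (s (τ a')))
      - ∑ a' ∈ univ.erase a, W (r a') (s (σ r s a'))

theorem abs_sum_erase_le_card_mul {W : α → β → ℝ} {C : ℝ} (hW : ∀ x y, |W x y| ≤ C)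
    (r : ι → α) (s : ι → β) (τ : Equiv.Perm ι) (i : ι) :
    |∑ a ∈ univ.erase i, W (r a) (s (τ a))| ≤ Fintype.card ι * C := by
  have hC : 0 ≤ C := (abs_nonneg _).trans (hW (r i) (s i))
  calc |∑ a ∈ univ.erase i, W (r a) (s (τ a))|
      ≤ ∑ a ∈ univ.erase i, |W (r a) (s (τ a))| := abs_sum_le_sum_abs _ _
    _ ≤ #(univ.erase i) • C := sum_le_card_nsmul _ _ _ fun a _ => hW _ _
    _ ≤ Fintype.card ι * C := by
      rw [nsmul_eq_mul]
      exact mul_le_mul_of_nonneg_right (by exact_mod_cast card_erase_le) hC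

namespace IsVCGMatching

variable {W : α → β → ℝ} {σ : (ι → α) → (ι → β) → Equiv.Perm ι}
  {p : (ι → α) → (ι → β) → ι → ℝ}

theorem abs_payment_le (h : IsVCGMatching W σ p) {C : ℝ} (hW : ∀ x y, |W x y| ≤ C)
    (r : ι → α) (s : ι → β) (a : ι) : |p r s a| ≤ 2 * Fintype.card ι * C := by
  rw [h.payment_eq, two_mul, add_mul]
  exact (abs_sub _ _).trans (add_le_add
    (abs_ciSup_le_of_forall_abs_le fun τ => abs_sum_erase_le_card_mul hW r s τ a)
    (abs_sum_erase_le_card_mul hW r s _ a))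

theorem utility_le_of_eq_off (h : IsVCGMatching W σ p) {r r' : ι → α} (s : ι → β) {i : ι}
    (hr : ∀ a ≠ i, r' a = r a) :
    W (r i) (s (σ r' s i)) - p r' s i ≤ W (r i) (s (σ r s i)) - p r s i := by
  have hothers : ∀ τ : Equiv.Perm ι,
      ∑ a ∈ univ.erase i, W (r' a) (s (τ a)) = ∑ a ∈ univ.erase i, W (r a) (s (τ a)) :=
    fun τ => sum_congr rfl fun a ha => by rw [hr a (ne_of_mem_erase ha)]
  have hsplit : ∀ τ : Equiv.Perm ι,
      W (r i) (s (τ i)) + ∑ a ∈ univ.erase i, W (r a) (s (τ a)) = ∑ a, W (r a) (s (τ a)) :=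
    fun τ => add_sum_erase _ (fun a => W (r a) (s (τ a))) (mem_univ i)
  have hopt := h.welfare_le r s (σ r' s)
  rw [← hsplit, ← hsplit] at hopt
  rw [h.payment_eq r', h.payment_eq r, hothers, iSup_congr hothers]
  linarith

end IsVCGMatching

end VCG

section ReplicaSurrogateMatching

variable {T : Type*} {k : ℕ}

/-- `c = (r', s, i)` holds the other replicas, the surrogates and the agent's slot; `t` is the
true type and `d` the report. -/
def rsmUtility (W : T → T → ℝ)
    (σ : (Fin (k + 1) → T) → (Fin (k + 1) → T) → Equiv.Perm (Fin (k + 1)))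
    (p : (Fin (k + 1) → T) → (Fin (k + 1) → T) → Fin (k + 1) → ℝ) (t d : T)
    (c : (Fin k → T) × (Fin (k + 1) → T) × Fin (k + 1)) : ℝ :=
  W t (c.2.1 (σ (c.2.2.insertNth d c.1) c.2.1 c.2.2)) - p (c.2.2.insertNth d c.1) c.2.1 c.2.2

variable {W : T → T → ℝ}
  {σ : (Fin (k + 1) → T) → (Fin (k + 1) → T) → Equiv.Perm (Fin (k + 1))}
  {p : (Fin (k + 1) → T) → (Fin (k + 1) → T) → Fin (k + 1) → ℝ}

theorem IsVCGMatching.rsmUtility_le_truthful (h : IsVCGMatching W σ p) (t d : T)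
    (c : (Fin k → T) × (Fin (k + 1) → T) × Fin (k + 1)) :
    rsmUtility W σ p t d c ≤ rsmUtility W σ p t t c := by
  obtain ⟨r', s, i⟩ := c
  have hoff : ∀ a ≠ i, Fin.insertNth (α := fun _ => T) i d r' a =
      Fin.insertNth (α := fun _ => T) i t r' a := by
    intro a ha
    obtain ⟨l, rfl⟩ := Fin.exists_succAbove_eq ha
    simp only [Fin.insertNth_apply_succAbove]
  simpa only [rsmUtility, Fin.insertNth_apply_same] using h.utility_le_of_eq_off s hoff

theorem measurable_rsmUtility [MeasurableSpace T]
    (hW : Measurable fun q : T × T => W q.1 q.2)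
    (hσ : Measurable fun q : ((Fin (k + 1) → T) × (Fin (k + 1) → T)) × Fin (k + 1) =>
      σ q.1.1 q.1.2 q.2)
    (hp : Measurable fun q : ((Fin (k + 1) → T) × (Fin (k + 1) → T)) × Fin (k + 1) =>
      p q.1.1 q.1.2 q.2)
    (t d : T) : Measurable (rsmUtility W σ p t d) := by
  have hmarket : Measurable fun c : (Fin k → T) × (Fin (k + 1) → T) × Fin (k + 1) =>
      (((c.2.2.insertNth d c.1 : Fin (k + 1) → T), c.2.1), c.2.2) :=
    ((measurable_snd.snd.finInsertNth measurable_const measurable_fst).prodMk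
      measurable_snd.fst).prodMk measurable_snd.snd
  exact (hW.comp (measurable_const.prodMk
    (measurable_snd.fst.apply_of_countable (hσ.comp hmarket)))).sub (hp.comp hmarket)

theorem integrable_rsmUtility [MeasurableSpace T]
    {ν : Measure ((Fin k → T) × (Fin (k + 1) → T) × Fin (k + 1))} [IsFiniteMeasure ν]
    (h : IsVCGMatching W σ p) (hW : Measurable fun q : T × T => W q.1 q.2) {C : ℝ}
    (hWC : ∀ x y, |W x y| ≤ C)
    (hσ : Measurable fun q : ((Fin (k + 1) → T) × (Fin (k + 1) → T)) × Fin (k + 1) =>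
      σ q.1.1 q.1.2 q.2)
    (hp : Measurable fun q : ((Fin (k + 1) → T) × (Fin (k + 1) → T)) × Fin (k + 1) =>
      p q.1.1 q.1.2 q.2)
    (t d : T) : Integrable (rsmUtility W σ p t d) ν :=
  .of_bound (measurable_rsmUtility hW hσ hp t d).aestronglyMeasurable
    (C + 2 * Fintype.card (Fin (k + 1)) * C) <| ae_of_all _ fun _ =>
      (abs_sub _ _).trans (add_le_add (hWC _ _) (h.abs_payment_le hWC _ _ _))

end ReplicaSurrogateMatching

/-- Truthfulness of the Replica-Surrogate-Matching procedure for a single agent `j`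
facing i.i.d. opponents: with `n = nm1 + 1` agents, `m = k + 1` replicas, a measurable
algorithm `A`, a bounded jointly measurable valuation `v`, the expected weight
function `W r s = 𝔼_{x ~ μ^{n-1}} v r (A (j.insertNth s x))`, and `(σ, p)` a VCG
matching selector for `W` on markets of size `m` (welfare-maximizing matching with
externality payments, jointly measurable), the agent's expected utility
`U t b = 𝔼_{(r',s,i)} [ 𝔼_{x ~ μ^{n-1}} v t (A (j.insertNth (matched surrogate) x))
− payment ]` satisfies `U t t ≥ U t b` for every true type `t` and report `b`. -/
theorem rsm_single_agent_truthful
    {T O : Type*} [MeasurableSpace T] [MeasurableSpace O]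
    (μ : Measure T) [IsProbabilityMeasure μ]
    (nm1 : ℕ) (j : Fin (nm1 + 1)) (k : ℕ)
    (A : (Fin (nm1 + 1) → T) → O) (hA : Measurable A)
    (v : T → O → ℝ) (hv : Measurable fun q : T × O => v q.1 q.2)
    (C : ℝ) (hC : ∀ (t : T) (o : O), |v t o| ≤ C)
    (W : T → T → ℝ)
    (hW : ∀ r s : T,
      W r s = ∫ x, v r (A (j.insertNth s x)) ∂(Measure.pi fun _ : Fin nm1 => μ))
    (σ : (Fin (k + 1) → T) → (Fin (k + 1) → T) → Equiv.Perm (Fin (k + 1)))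
    (p : (Fin (k + 1) → T) → (Fin (k + 1) → T) → Fin (k + 1) → ℝ)
    (hσmeas : Measurable
      (fun q : ((Fin (k + 1) → T) × (Fin (k + 1) → T)) × Fin (k + 1) =>
        σ q.1.1 q.1.2 q.2))
    (hpmeas : Measurable
      (fun q : ((Fin (k + 1) → T) × (Fin (k + 1) → T)) × Fin (k + 1) =>
        p q.1.1 q.1.2 q.2))
    (hσopt : ∀ (r s : Fin (k + 1) → T) (τ : Equiv.Perm (Fin (k + 1))),
      ∑ a, W (r a) (s (τ a)) ≤ ∑ a, W (r a) (s (σ r s a)))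
    (hpay : ∀ (r s : Fin (k + 1) → T) (a : Fin (k + 1)),
      p r s a =
        (⨆ τ : Equiv.Perm (Fin (k + 1)), ∑ a' ∈ univ.erase a, W (r a') (s (τ a')))
          - ∑ a' ∈ univ.erase a, W (r a') (s (σ r s a'))) :
    ∀ t b : T,
      (∫ c : (Fin k → T) × (Fin (k + 1) → T) × Fin (k + 1),
          ((∫ x, v t (A (j.insertNth
              (c.2.1 (σ (c.2.2.insertNth t c.1) c.2.1 c.2.2)) x))
            ∂(Measure.pi fun _ : Fin nm1 => μ))
            - p (c.2.2.insertNth t c.1) c.2.1 c.2.2)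
        ∂((Measure.pi fun _ : Fin k => μ).prod
          ((Measure.pi fun _ : Fin (k + 1) => μ).prod
            (PMF.uniformOfFintype (Fin (k + 1))).toMeasure)))
      ≥
      (∫ c : (Fin k → T) × (Fin (k + 1) → T) × Fin (k + 1),
          ((∫ x, v t (A (j.insertNth
              (c.2.1 (σ (c.2.2.insertNth b c.1) c.2.1 c.2.2)) x))
            ∂(Measure.pi fun _ : Fin nm1 => μ))
            - p (c.2.2.insertNth b c.1) c.2.1 c.2.2)
        ∂((Measure.pi fun _ : Fin k => μ).prod
          ((Measure.pi fun _ : Fin (k + 1) => μ).prod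
            (PMF.uniformOfFintype (Fin (k + 1))).toMeasure))) := by
  intro t b
  have hvcg : IsVCGMatching W σ p := ⟨hσopt, hpay⟩
  have hWm : Measurable fun q : T × T => W q.1 q.2 := by
    simpa only [← hW] using
      measurable_integral_insertNth (Measure.pi fun _ : Fin nm1 => μ) j hA hv
  have hWC : ∀ r s, |W r s| ≤ C := fun r s =>
    hW r s ▸ abs_integral_le_of_forall_abs_le fun x => hC r _
  simp only [← hW]
  exact integral_mono (integrable_rsmUtility hvcg hWm hWC hσmeas hpmeas t b)
    (integrable_rsmUtility hvcg hWm hWC hσmeas hpmeas t t) (hvcg.rsmUtility_le_truthful t b)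
end
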